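/- arXiv:1110.3167 — 3 statements merged into one kernel-verified Lean document; each statement's English description precedes it below -/
import Mathlib

section
/- With X, u₃ as in the type-III example and the bilinear form ⟨v,w⟩ = vᵀQw for Q = [[0,0,0,-1],[0,0,-1,0],[0,1,0,0],[1,0,0,0]], define u₂ = (1/√3)·Xu₃ and ū₂ = conj(u₂). Then for every complex number z, -i·⟨exp(zX)ū₂, conj(exp(zX)ū₂)⟩ = 1 - 3|z|². -/
/-!
The vector ū₂ is annihilated by X², so exp(zX)ū₂ = ū₂ + z·Xū₂ is affine in z. Since
(v, w) ↦ v ⬝ᵥ Q *ᵥ conj w is sesquilinear, the pairing splits into four constant terms: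
ū₂ and Xū₂ are orthogonal for it, while their self-pairings are i and -3i.
-/

open Matrix Complex

theorem Matrix.exp_mulVec_eq_sum_of_pow_mulVec_eq_zero {𝕂 n : Type*} [RCLike 𝕂] [Fintype n]
    [DecidableEq n] (A : Matrix n n 𝕂) (v : n → 𝕂) {k : ℕ} (hk : A ^ k *ᵥ v = 0) :
    NormedSpace.exp A *ᵥ v = ∑ i ∈ Finset.range k, (i.factorial⁻¹ : 𝕂) • (A ^ i *ᵥ v) := by
  -- Summability only depends on the topology, so any matrix norm may be used to prove it.
  have hsummable : Summable fun i : ℕ ↦ (i.factorial⁻¹ : 𝕂) • A ^ i :=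
    open scoped Norms.Operator in NormedSpace.expSeries_summable' A
  have hvanish : ∀ i ∉ Finset.range k, (i.factorial⁻¹ : 𝕂) • (A ^ i *ᵥ v) = 0 := by
    intro i hi
    obtain ⟨j, rfl⟩ := Nat.exists_eq_add_of_le' (not_lt.mp (Finset.mem_range.not.mp hi))
    rw [pow_add, ← mulVec_mulVec, hk, mulVec_zero, smul_zero]
  let applyTo : Matrix n n 𝕂 →+ (n → 𝕂) := AddMonoidHom.mk' (· *ᵥ v) fun _ _ ↦ add_mulVec _ _ _
  rw [NormedSpace.exp_eq_tsum 𝕂, ← tsum_eq_sum (L := .unconditional ℕ) hvanish]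
  simp_rw [← smul_mulVec]
  exact hsummable.map_tsum applyTo (continuous_id.matrix_mulVec continuous_const)

theorem Matrix.exp_smul_mulVec_of_mulVec_mulVec_eq_zero {𝕂 n : Type*} [RCLike 𝕂] [Fintype n]
    [DecidableEq n] (A : Matrix n n 𝕂) (v : n → 𝕂) (h : A *ᵥ A *ᵥ v = 0) (z : 𝕂) :
    NormedSpace.exp (z • A) *ᵥ v = v + z • A *ᵥ v := by
  rw [exp_mulVec_eq_sum_of_pow_mulVec_eq_zero (k := 2)]
  · simp [Finset.sum_range_succ, smul_mulVec]
  · rw [sq, ← mulVec_mulVec, smul_mulVec, smul_mulVec, mulVec_smul, h, smul_zero, smul_zero]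

theorem Matrix.add_smul_dotProduct_mulVec_star {R n : Type*} [CommRing R] [StarRing R] [Fintype n]
    (Q : Matrix n n R) (a b : n → R) (z : R) :
    (a + z • b) ⬝ᵥ Q *ᵥ star (a + z • b) =
      a ⬝ᵥ Q *ᵥ star a + star z * (a ⬝ᵥ Q *ᵥ star b) + z * (b ⬝ᵥ Q *ᵥ star a)
        + z * star z * (b ⬝ᵥ Q *ᵥ star b) := by
  simp only [star_add, star_smul, mulVec_add, mulVec_smul, dotProduct_add, add_dotProduct,
    dotProduct_smul, smul_dotProduct, smul_eq_mul]
  ring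

/-- For the type-III example, -i⟨exp(zX)ū₂, conj(exp(zX)ū₂)⟩ = 1 - 3|z|². -/
theorem typeIII_expX_u2bar_pairing (z : ℂ) :
    let Q : Matrix (Fin 4) (Fin 4) ℂ :=
      !![0, 0, 0, -1; 0, 0, -1, 0; 0, 1, 0, 0; 1, 0, 0, 0]
    let X : Matrix (Fin 4) (Fin 4) ℂ :=
      (1/2 : ℂ) • !![-3, 3*I, 0, 0; I, -1, 4*I, 0; 0, I, 1, -3*I; 0, 0, -I, 3]
    let u₃ : Fin 4 → ℂ := fun j => ((Real.sqrt 3 : ℂ)/12) * ![6, 6*I, -3, I] j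
    let u₂ : Fin 4 → ℂ := (1/(Real.sqrt 3 : ℂ)) • X.mulVec u₃
    let ub₂ : Fin 4 → ℂ := fun j => starRingEnd ℂ (u₂ j)
    let w : Fin 4 → ℂ := (NormedSpace.exp (z • X)).mulVec ub₂
    (-I) * (w ⬝ᵥ Q.mulVec (fun j => starRingEnd ℂ (w j))) = 1 - 3 * ‖z‖ ^ 2 := by
  intro Q X u₃ u₂ ub₂ w
  have hu₂ : u₂ = ![-3/2, -I/2, -1/4, I/4] := by
    have hsqrt : (Real.sqrt 3 : ℂ) ≠ 0 := by exact_mod_cast (Real.sqrt_pos.2 (by norm_num)).ne'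
    have hscale : u₂ = (1 / 12 : ℂ) • X *ᵥ ![6, 6*I, -3, I] := by
      change (1 / (Real.sqrt 3 : ℂ)) • X *ᵥ ((Real.sqrt 3 / 12 : ℂ) • ![6, 6*I, -3, I]) = _
      rw [mulVec_smul, smul_smul]
      congr 1
      field_simp
    rw [hscale]
    ext j
    fin_cases j <;> norm_num [X, Complex.ext_iff]
  set a : Fin 4 → ℂ := ![-3/2, I/2, -1/4, -I/4]
  set b : Fin 4 → ℂ := ![3/2, -3*I/2, -3/4, -I/4]
  have hub₂ : ub₂ = a := by
    ext j
    fin_cases j <;> simp [ub₂, a, hu₂, map_div₀, map_ofNat, conj_I]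
  have hXub₂ : X *ᵥ ub₂ = b := by
    rw [hub₂]; ext j
    fin_cases j <;> norm_num [X, a, b, Complex.ext_iff]
  have hXXub₂ : X *ᵥ X *ᵥ ub₂ = 0 := by
    rw [hXub₂]; ext j
    fin_cases j <;> norm_num [X, b, Complex.ext_iff]
  have hw : w = ub₂ + z • X *ᵥ ub₂ := exp_smul_mulVec_of_mulVec_mulVec_eq_zero X ub₂ hXXub₂ z
  obtain ⟨haa, hab, hba, hbb⟩ : a ⬝ᵥ Q *ᵥ star a = I ∧ a ⬝ᵥ Q *ᵥ star b = 0 ∧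
      b ⬝ᵥ Q *ᵥ star a = 0 ∧ b ⬝ᵥ Q *ᵥ star b = -3 * I := by
    refine ⟨?_, ?_, ?_, ?_⟩ <;>
      simp [a, b, Q, dotProduct, Fin.sum_univ_four, map_ofNat, conj_I, Complex.ext_iff] <;> norm_num
  change -I * (w ⬝ᵥ Q *ᵥ star w) = _
  rw [hw, add_smul_dotProduct_mulVec_star, hXub₂, hub₂, haa, hab, hba, hbb, Complex.star_def,
    mul_conj']
  linear_combination (3 * (‖z‖ : ℂ) ^ 2 - 1) * I_sq
end

section
/- For the 2×2 matrices n₋ = [[0,1],[0,0]], h = [[-1,0],[0,1]], n₊ = [[0,0],[1,0]], set X = (1/2)(i·n₋ - h + i·n₊). Then for all real y ≥ 0, the Möbius transformation associated to exp((y/(2+y))·X) sends i to (1+y)·i. -/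
/-!
Since `X` has zero trace and zero determinant, `X ^ 2 = 0`, so `exp (t • X) = 1 + t • X`.
This matrix sends `i` to `(1 + t) / (1 - t) * i`, and `t = y / (2 + y)` is exactly the value with
`(1 + t) / (1 - t) = 1 + y`.
-/

open Matrix Complex

open Finset Nat in
theorem NormedSpace.exp_eq_sum_range_of_pow_eq_zero {𝔸 : Type*} [Ring 𝔸] [Algebra ℚ 𝔸]
    [TopologicalSpace 𝔸] [IsTopologicalRing 𝔸] {a : 𝔸} {k : ℕ} (h : a ^ k = 0) :
    exp a = ∑ i ∈ range k, (i !⁻¹ : ℚ) • a ^ i := by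
  rw [exp_eq_tsum_rat]
  refine tsum_eq_sum fun i hi => ?_
  rw [pow_eq_zero_of_le (by simpa using hi) h, smul_zero]

theorem NormedSpace.exp_eq_one_add_of_sq_eq_zero {𝔸 : Type*} [Ring 𝔸] [Algebra ℚ 𝔸]
    [TopologicalSpace 𝔸] [IsTopologicalRing 𝔸] {a : 𝔸} (h : a ^ 2 = 0) :
    exp a = 1 + a := by
  simp [exp_eq_sum_range_of_pow_eq_zero h, Finset.sum_range_succ]

theorem half_smul_I_nm_sub_h_add_I_np :
    (1/2 : ℂ) • (I • !![0, 1; 0, 0] - !![-1, 0; 0, 1] + I • !![0, 0; 1, 0]) =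
      !![1/2, I/2; I/2, -(1/2)] := by
  ext i j
  fin_cases i <;> fin_cases j <;> simp <;> ring

theorem sq_half_I_matrix_eq_zero :
    (!![1/2, I/2; I/2, -(1/2)] : Matrix (Fin 2) (Fin 2) ℂ) ^ 2 = 0 := by
  rw [sq, mul_fin_two, eta_fin_two (0 : Matrix (Fin 2) (Fin 2) ℂ)]
  congr 1
  simp only [Matrix.zero_apply]
  ring_nf
  simp [I_sq]

theorem moebius_one_add_smul_half_I_matrix_apply_I (t : ℂ) :
    let g : Matrix (Fin 2) (Fin 2) ℂ := 1 + t • !![1/2, I/2; I/2, -(1/2)]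
    (g 0 0 * I + g 0 1) / (g 1 0 * I + g 1 1) = (1 + t) / (1 - t) * I := by
  intro g
  have hg : g = !![1 + t/2, t*I/2; t*I/2, 1 - t/2] := by
    ext i j
    fin_cases i <;> fin_cases j <;> simp [g] <;> ring
  rw [hg]
  change ((1 + t/2) * I + t*I/2) / (t*I/2 * I + (1 - t/2)) = _
  rw [show t*I/2 * I + (1 - t/2) = 1 - t by linear_combination (t/2) * I_sq]
  ring

/-- The Möbius transformation of exp((y/(2+y))X) sends i to (1+y)i, where
X = (1/2)(i n₋ - h + i n₊). -/
theorem expX_moebius_sends_i (y : ℝ) (hy : 0 ≤ y) :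
    let nm : Matrix (Fin 2) (Fin 2) ℂ := !![0, 1; 0, 0]
    let h : Matrix (Fin 2) (Fin 2) ℂ := !![-1, 0; 0, 1]
    let np : Matrix (Fin 2) (Fin 2) ℂ := !![0, 0; 1, 0]
    let X : Matrix (Fin 2) (Fin 2) ℂ := (1/2 : ℂ) • (I • nm - h + I • np)
    let g : Matrix (Fin 2) (Fin 2) ℂ := NormedSpace.exp (((y : ℂ)/(2 + y)) • X)
    (g 0 0 * I + g 0 1) / (g 1 0 * I + g 1 1) = (1 + y) * I := by
  intro nm h np X g
  have hX : X = !![1/2, I/2; I/2, -(1/2)] := half_smul_I_nm_sub_h_add_I_np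
  have hg : g = 1 + ((y : ℂ) / (2 + y)) • X := NormedSpace.exp_eq_one_add_of_sq_eq_zero <| by
    rw [smul_pow, hX, sq_half_I_matrix_eq_zero, smul_zero]
  have h2y : (2 + y : ℂ) ≠ 0 := by exact_mod_cast (by linarith : (2 + y : ℝ) ≠ 0)
  rw [hg, hX, moebius_one_add_smul_half_I_matrix_apply_I]
  congr 1
  field_simp
  ring
end

section
/- Let X = (1/2)(i·n₋ - h + i·n₊) with n₋ = [[0,1],[0,0]], h = [[-1,0],[0,1]], n₊ = [[0,0],[1,0]]. Then for any complex z with |z| < 1 and z ≠ 1, the Möbius transformation of exp(zX) maps i to ((1+z)/(1-z))·i, and this point lies in the upper half plane. -/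
/-!
`X` squares to zero, so `exp (z • X) = 1 + z • X`, which sends `i` to `((1 + z) / (1 - z)) • i`.
The imaginary part of that point is `Re ((1 + z) / (1 - z)) = (1 - |z|²) / |1 - z|² > 0`.
-/

open Matrix Complex

namespace NormedSpace

variable {𝔸 : Type*} [Ring 𝔸] [Algebra ℚ 𝔸] [TopologicalSpace 𝔸] [IsTopologicalRing 𝔸]

theorem exp_eq_sum_range_of_pow_eq_zero_s9 {a : 𝔸} {k : ℕ} (ha : a ^ k = 0) :
    exp a = ∑ n ∈ Finset.range k, (n.factorial⁻¹ : ℚ) • a ^ n := by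
  rw [exp_eq_tsum_rat]
  refine tsum_eq_sum fun n hn => ?_
  rw [pow_eq_zero_of_le (by simpa using hn) ha, smul_zero]

theorem exp_eq_one_add_of_sq_eq_zero_s9 {a : 𝔸} (ha : a ^ 2 = 0) : exp a = 1 + a := by
  simp [exp_eq_sum_range_of_pow_eq_zero_s9 ha, Finset.sum_range_succ]

end NormedSpace

noncomputable def moebius (g : Matrix (Fin 2) (Fin 2) ℂ) (w : ℂ) : ℂ :=
  (g 0 0 * w + g 0 1) / (g 1 0 * w + g 1 1)

theorem moebius_of (a b c d w : ℂ) : moebius !![a, b; c, d] w = (a * w + b) / (c * w + d) := rfl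

/-- `X = (1/2) (i n₋ - h + i n₊)` written out. -/
noncomputable def matrixX : Matrix (Fin 2) (Fin 2) ℂ := !![1 / 2, I / 2; I / 2, -1 / 2]

theorem matrixX_sq : matrixX ^ 2 = 0 := by
  rw [sq, matrixX, mul_fin_two]
  ext i j
  fin_cases i <;> fin_cases j <;> simp [← sq, div_pow] <;> ring

theorem exp_smul_matrixX (z : ℂ) : NormedSpace.exp (z • matrixX) = 1 + z • matrixX :=
  NormedSpace.exp_eq_one_add_of_sq_eq_zero_s9 (by rw [smul_pow, matrixX_sq, smul_zero])

theorem one_add_smul_matrixX (z : ℂ) :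
    1 + z • matrixX = !![1 + z / 2, z * I / 2; z * I / 2, 1 - z / 2] := by
  ext i j
  fin_cases i <;> fin_cases j <;> simp [matrixX] <;> ring

theorem moebius_one_add_smul_matrixX_I (z : ℂ) :
    moebius (1 + z • matrixX) I = (1 + z) / (1 - z) * I := by
  have hnum : (1 + z / 2) * I + z * I / 2 = (1 + z) * I := by ring
  have hden : z * I / 2 * I + (1 - z / 2) = 1 - z := by linear_combination z / 2 * I_sq
  rw [one_add_smul_matrixX, moebius_of, hnum, hden, div_mul_eq_mul_div]

theorem re_one_add_div_one_sub_pos {z : ℂ} (hz : ‖z‖ < 1) : 0 < ((1 + z) / (1 - z)).re := by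
  have h1z : 1 - z ≠ 0 := sub_ne_zero.mpr (by rintro rfl; simp at hz)
  have hnorm : normSq z < 1 := by rw [← Complex.sq_norm]; nlinarith [norm_nonneg z]
  have hnum : (1 + z).re * (1 - z).re + (1 + z).im * (1 - z).im = 1 - normSq z := by
    rw [normSq_apply]; simp only [add_re, sub_re, add_im, sub_im, one_re, one_im]; ring
  rw [div_re, ← add_div, hnum]
  exact div_pos (by linarith) (normSq_pos.mpr h1z)

theorem expzX_moebius_sends_i_general (z : ℂ) (hz : ‖z‖ < 1) :
    let nm : Matrix (Fin 2) (Fin 2) ℂ := !![0, 1; 0, 0]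
    let h : Matrix (Fin 2) (Fin 2) ℂ := !![-1, 0; 0, 1]
    let np : Matrix (Fin 2) (Fin 2) ℂ := !![0, 0; 1, 0]
    let X : Matrix (Fin 2) (Fin 2) ℂ := (1/2 : ℂ) • (I • nm - h + I • np)
    let g : Matrix (Fin 2) (Fin 2) ℂ := NormedSpace.exp (z • X)
    (g 0 0 * I + g 0 1) / (g 1 0 * I + g 1 1) = ((1 + z)/(1 - z)) * I ∧
    0 < (((1 + z)/(1 - z)) * I).im := by
  intro nm h np X g
  have hX : X = matrixX := by
    ext i j
    fin_cases i <;> fin_cases j <;> simp [X, nm, h, np, matrixX] <;> ring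
  refine ⟨?_, by simpa using re_one_add_div_one_sub_pos hz⟩
  change moebius (NormedSpace.exp (z • X)) I = _
  rw [hX, exp_smul_matrixX, moebius_one_add_smul_matrixX_I]

/-- The Möbius transformation of exp(zX) maps i to ((1+z)/(1-z))·i, a point of
the upper half plane, for |z| < 1 and z ≠ 1. -/
theorem expzX_moebius_sends_i (z : ℂ) (hz : ‖z‖ < 1) (hz1 : z ≠ 1) :
    let nm : Matrix (Fin 2) (Fin 2) ℂ := !![0, 1; 0, 0]
    let h : Matrix (Fin 2) (Fin 2) ℂ := !![-1, 0; 0, 1]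
    let np : Matrix (Fin 2) (Fin 2) ℂ := !![0, 0; 1, 0]
    let X : Matrix (Fin 2) (Fin 2) ℂ := (1/2 : ℂ) • (I • nm - h + I • np)
    let g : Matrix (Fin 2) (Fin 2) ℂ := NormedSpace.exp (z • X)
    (g 0 0 * I + g 0 1) / (g 1 0 * I + g 1 1) = ((1 + z)/(1 - z)) * I ∧
    0 < (((1 + z)/(1 - z)) * I).im :=
  expzX_moebius_sends_i_general z hz
end
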